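/- arXiv:2407.00347 — 5 statements merged into one kernel-verified Lean document; each statement's English description precedes it below -/
import Mathlib

section
/- Let g, σ², g_e, σ_e² > 0 with g/σ² > g_e/σ_e², and fix b > 0. Then the function p ↦ r_s(b, p) = b·log₂(1 + g·p/(σ²·b)) − b·log₂(1 + g_e·p/(σ_e²·b)) is strictly concave on (0, ∞). -/
/-- For `g, σ², g_e, σ_e² > 0` with `g/σ² > g_e/σ_e²` and fixed `b > 0`, the secrecy rate
`p ↦ r_s(b,p) = b·log₂(1 + g·p/(σ²·b)) − b·log₂(1 + g_e·p/(σ_e²·b))` is strictly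
concave on `(0, ∞)`. -/
theorem stmt6 (g σ2 ge σe2 b : ℝ) (hg : 0 < g) (hσ2 : 0 < σ2) (hge : 0 < ge)
    (hσe2 : 0 < σe2) (hgain : ge / σe2 < g / σ2) (hb : 0 < b) :
    StrictConcaveOn ℝ (Set.Ioi 0)
      (fun p : ℝ => b * Real.logb 2 (1 + g * p / (σ2 * b))
        - b * Real.logb 2 (1 + ge * p / (σe2 * b))) := by
  have hlog2 : (0:ℝ) < Real.log 2 := Real.log_pos one_lt_two
  set a := g / (σ2 * b) with ha_def
  set e := ge / (σe2 * b) with he_def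
  have ha : 0 < a := div_pos hg (mul_pos hσ2 hb)
  have he : 0 < e := div_pos hge (mul_pos hσe2 hb)
  have hea : e < a := by
    rw [ha_def, he_def, div_mul_eq_div_div, div_mul_eq_div_div]
    exact div_lt_div_of_pos_right hgain hb
  set c := b / Real.log 2 with hc_def
  have hc : 0 < c := div_pos hb hlog2
  have hfe : (fun p : ℝ => b * Real.logb 2 (1 + g * p / (σ2 * b))
        - b * Real.logb 2 (1 + ge * p / (σe2 * b)))
      = fun p : ℝ => c * (Real.log (1 + a * p) - Real.log (1 + e * p)) := by
    funext p
    rw [show 1 + g * p / (σ2 * b) = 1 + a * p by rw [ha_def]; ring,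
      show 1 + ge * p / (σe2 * b) = 1 + e * p by rw [he_def]; ring]
    simp only [Real.logb, hc_def]
    field_simp
  rw [hfe]
  -- positivity of the log arguments
  have hpa : ∀ x ∈ Set.Ioi (0:ℝ), 0 < 1 + a * x := fun x hx => by
    have := mul_pos ha (Set.mem_Ioi.mp hx); linarith
  have hpe : ∀ x ∈ Set.Ioi (0:ℝ), 0 < 1 + e * x := fun x hx => by
    have := mul_pos he (Set.mem_Ioi.mp hx); linarith
  apply strictConcaveOn_of_deriv2_neg (convex_Ioi 0)
  · apply ContinuousOn.mul continuousOn_const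
    apply ContinuousOn.sub
    · exact ContinuousOn.log (Continuous.continuousOn (by fun_prop)) (fun x hx => (hpa x hx).ne')
    · exact ContinuousOn.log (Continuous.continuousOn (by fun_prop)) (fun x hx => (hpe x hx).ne')
  · intro x hx
    rw [interior_Ioi] at hx
    have hx0 : 0 < x := hx
    have h1a : ∀ y ∈ Set.Ioi (0:ℝ), HasDerivAt (fun p : ℝ => 1 + a * p) a y := by
      intro y hy
      simpa using ((hasDerivAt_id y).const_mul a).const_add 1
    have h1e : ∀ y ∈ Set.Ioi (0:ℝ), HasDerivAt (fun p : ℝ => 1 + e * p) e y := by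
      intro y hy
      simpa using ((hasDerivAt_id y).const_mul e).const_add 1
    have hd1 : ∀ y ∈ Set.Ioi (0:ℝ),
        HasDerivAt (fun p : ℝ => c * (Real.log (1 + a * p) - Real.log (1 + e * p)))
          (c * (a / (1 + a * y) - e / (1 + e * y))) y := by
      intro y hy
      exact (((h1a y hy).log (hpa y hy).ne').sub ((h1e y hy).log (hpe y hy).ne')).const_mul c
    have hderiv_eq : Set.EqOn
        (deriv (fun p : ℝ => c * (Real.log (1 + a * p) - Real.log (1 + e * p))))
        (fun y => c * (a / (1 + a * y) - e / (1 + e * y))) (Set.Ioi 0) := by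
      intro y hy
      exact (hd1 y hy).deriv
    have hev : deriv (fun p : ℝ => c * (Real.log (1 + a * p) - Real.log (1 + e * p)))
        =ᶠ[nhds x] (fun y => c * (a / (1 + a * y) - e / (1 + e * y))) :=
      Filter.eventuallyEq_of_mem (isOpen_Ioi.mem_nhds hx) hderiv_eq
    have hd2 : HasDerivAt (fun y => c * (a / (1 + a * y) - e / (1 + e * y)))
        (c * ((0 * (1 + a * x) - a * a) / (1 + a * x) ^ 2
          - (0 * (1 + e * x) - e * e) / (1 + e * x) ^ 2)) x := by
      exact (((hasDerivAt_const x a).div (h1a x hx) (hpa x hx).ne').sub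
        ((hasDerivAt_const x e).div (h1e x hx) (hpe x hx).ne')).const_mul c
    have : deriv^[2] (fun p : ℝ => c * (Real.log (1 + a * p) - Real.log (1 + e * p))) x
        = c * ((0 * (1 + a * x) - a * a) / (1 + a * x) ^ 2
          - (0 * (1 + e * x) - e * e) / (1 + e * x) ^ 2) := by
      show deriv (deriv _) x = _
      rw [hev.deriv_eq]
      exact hd2.deriv
    rw [this]
    have p1 := hpa x hx
    have p2 := hpe x hx
    have key : e ^ 2 / (1 + e * x) ^ 2 < a ^ 2 / (1 + a * x) ^ 2 := by
      rw [div_lt_div_iff₀ (by positivity) (by positivity)]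
      nlinarith [mul_pos (sub_pos.mpr hea) (show 0 < a + e + 2 * a * e * x by positivity)]
    have : (0 * (1 + a * x) - a * a) / (1 + a * x) ^ 2
        - (0 * (1 + e * x) - e * e) / (1 + e * x) ^ 2
        = e ^ 2 / (1 + e * x) ^ 2 - a ^ 2 / (1 + a * x) ^ 2 := by ring
    rw [this]
    have hneg : e ^ 2 / (1 + e * x) ^ 2 - a ^ 2 / (1 + a * x) ^ 2 < 0 := by linarith
    exact mul_neg_of_pos_of_neg hc hneg
end

section
/- Let g, σ², g_e, σ_e² > 0 with g/σ² > g_e/σ_e², and fix p > 0. Then the function b ↦ r_s(b, p) = b·log₂(1 + g·p/(σ²·b)) − b·log₂(1 + g_e·p/(σ_e²·b)) is strictly increasing on (0, ∞). -/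
open Real Set

lemma hasDerivAt_blog (a b : ℝ) (ha : 0 < a) (hb : 0 < b) :
    HasDerivAt (fun b : ℝ => b * Real.log (1 + a / b))
      (Real.log (1 + a / b) - a / (a + b)) b := by
  have hb' : b ≠ 0 := hb.ne'
  have hpos : 0 < 1 + a / b := by positivity
  have h1 : HasDerivAt (fun b : ℝ => 1 + a * b⁻¹) (a * (-(b ^ 2)⁻¹)) b :=
    ((hasDerivAt_inv hb').const_mul a).const_add 1
  have hpos' : 1 + a * b⁻¹ ≠ 0 := by
    rw [← div_eq_mul_inv]; exact hpos.ne'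
  have h2 := h1.log hpos'
  have h3 := (hasDerivAt_id b).mul h2
  have hab : a + b ≠ 0 := by positivity
  have h4 : (fun b : ℝ => b * Real.log (1 + a / b))
      = fun b : ℝ => id b * Real.log (1 + a * b⁻¹) := by
    funext x; simp [div_eq_mul_inv]
  have key : id b * (a * -(b ^ 2)⁻¹ / (1 + a * b⁻¹)) = -(a / (a + b)) := by
    field_simp
    simp only [id]
    ring
  rw [h4]
  convert (show HasDerivAt (fun y : ℝ => id y * Real.log (1 + a * y⁻¹)) _ b from h3) using 1
  rw [key]
  simp [div_eq_mul_inv, sub_eq_add_neg]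

lemma psi_mono (b : ℝ) (hb : 0 < b) :
    StrictMonoOn (fun t : ℝ => Real.log (1 + t / b) - t / (t + b)) (Ici 0) := by
  apply StrictMonoOn.mono (s := Ici 0)
  · apply strictMonoOn_of_deriv_pos (convex_Ici 0)
    · intro t ht
      have ht0 : (0:ℝ) ≤ t := ht
      have h1 : (0:ℝ) < 1 + t / b := by positivity
      have h2 : t + b ≠ 0 := by positivity
      have c1 : ContinuousAt (fun t : ℝ => Real.log (1 + t / b)) t :=
        ((continuous_const.add (continuous_id.div_const b)).continuousAt).log h1.ne'
      have c2 : ContinuousAt (fun t : ℝ => t / (t + b)) t :=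
        continuous_id.continuousAt.div
          ((continuous_id.add continuous_const).continuousAt) h2
      exact (c1.sub c2).continuousWithinAt
    · intro t ht
      rw [interior_Ici] at ht
      have ht0 : (0:ℝ) < t := ht
      have h1 : (0:ℝ) < 1 + t / b := by positivity
      have h2 : t + b ≠ 0 := by positivity
      have hlog : HasDerivAt (fun t : ℝ => Real.log (1 + t / b))
          ((1 / b) / (1 + t / b)) t :=
        (((hasDerivAt_id t).div_const b).const_add 1).log h1.ne'
      have hdiv : HasDerivAt (fun t : ℝ => t / (t + b))
          ((1 * (t + b) - t * 1) / (t + b) ^ 2) t :=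
        (hasDerivAt_id t).div ((hasDerivAt_id t).add_const b) h2
      have hψ := hlog.sub hdiv
      rw [show deriv (fun t : ℝ => Real.log (1 + t / b) - t / (t + b)) t = _ from hψ.deriv]
      rw [div_sub_div _ _ (by positivity : (1 + t / b) ≠ 0) (by positivity : ((t+b)^2 : ℝ) ≠ 0)]
      apply div_pos
      · have hb' : b ≠ 0 := hb.ne'
        have : 1 / b * (t + b) ^ 2 - (1 + t / b) * (1 * (t + b) - t * 1)
            = t * (t + b) / b := by field_simp; ring
        rw [this]
        positivity
      · positivity
  · exact le_refl _

/-- For `g, σ², g_e, σ_e² > 0` with `g/σ² > g_e/σ_e²` and fixed `p > 0`, the secrecy rate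
`b ↦ r_s(b,p) = b·log₂(1 + g·p/(σ²·b)) − b·log₂(1 + g_e·p/(σ_e²·b))` is strictly
increasing on `(0, ∞)`. -/
theorem stmt7 (g σ2 ge σe2 p : ℝ) (hg : 0 < g) (hσ2 : 0 < σ2) (hge : 0 < ge)
    (hσe2 : 0 < σe2) (hgain : ge / σe2 < g / σ2) (hp : 0 < p) :
    StrictMonoOn
      (fun b : ℝ => b * Real.logb 2 (1 + g * p / (σ2 * b))
        - b * Real.logb 2 (1 + ge * p / (σe2 * b)))
      (Set.Ioi 0) := by
  set a := g * p / σ2 with ha_def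
  set c := ge * p / σe2 with hc_def
  have ha : 0 < a := by positivity
  have hc : 0 < c := by positivity
  have hca : c < a := by
    have := mul_lt_mul_of_pos_right hgain hp
    rw [ha_def, hc_def]
    calc ge * p / σe2 = ge / σe2 * p := by ring
    _ < g / σ2 * p := this
    _ = g * p / σ2 := by ring
  have hfun : ∀ b : ℝ, b * Real.logb 2 (1 + g * p / (σ2 * b))
        - b * Real.logb 2 (1 + ge * p / (σe2 * b))
      = (b * Real.log (1 + a / b) - b * Real.log (1 + c / b)) / Real.log 2 := by
    intro b
    rw [Real.logb, Real.logb, ha_def, hc_def]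
    rw [div_div, div_div]
    ring
  have hlog2 : (0:ℝ) < Real.log 2 := Real.log_pos (by norm_num)
  apply strictMonoOn_of_deriv_pos (convex_Ioi 0)
  · intro b hb
    have hb0 : (0:ℝ) < b := hb
    have hd := (((hasDerivAt_blog a b ha hb0).sub (hasDerivAt_blog c b hc hb0)).div_const
      (Real.log 2)).continuousAt
    have : ContinuousAt (fun b : ℝ => b * Real.logb 2 (1 + g * p / (σ2 * b))
        - b * Real.logb 2 (1 + ge * p / (σe2 * b))) b := by
      refine ContinuousAt.congr hd ?_
      have hmem : Ioi (0:ℝ) ∈ nhds b := Ioi_mem_nhds hb0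
      filter_upwards [hmem] with x hx
      exact (hfun x).symm
    exact this.continuousWithinAt
  · intro b hb
    rw [interior_Ioi] at hb
    have hb0 : (0:ℝ) < b := hb
    have hd := ((hasDerivAt_blog a b ha hb0).sub (hasDerivAt_blog c b hc hb0)).div_const
      (Real.log 2)
    have hd' : HasDerivAt (fun b : ℝ => b * Real.logb 2 (1 + g * p / (σ2 * b))
        - b * Real.logb 2 (1 + ge * p / (σe2 * b)))
        ((Real.log (1 + a / b) - a / (a + b) - (Real.log (1 + c / b) - c / (c + b))) /
          Real.log 2) b := by
      refine hd.congr_of_eventuallyEq ?_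
      filter_upwards [Ioi_mem_nhds hb0] with x hx
      exact hfun x
    rw [hd'.deriv]
    apply div_pos _ hlog2
    have := psi_mono b hb0 (mem_Ici.mpr hc.le) (mem_Ici.mpr ha.le) hca
    simpa using sub_pos.mpr this
end

section
/- Let g, σ², g_e, σ_e² > 0 with g/σ² > g_e/σ_e², and fix p > 0. Then the function b ↦ r_s(b, p) = b·log₂(1 + g·p/(σ²·b)) − b·log₂(1 + g_e·p/(σ_e²·b)) is strictly concave on (0, ∞). -/
open Real Set Filter

private lemma aux_d1 (a x : ℝ) (hx : 0 < x) (ha : 0 < a) :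
    HasDerivAt (fun b : ℝ => b * Real.log (b + a)) (Real.log (x + a) + x / (x + a)) x := by
  have h1 : (0:ℝ) < x + a := by linarith
  have h2 : HasDerivAt (fun b : ℝ => Real.log (b + a)) (1 / (x + a)) x := by
    simpa using ((hasDerivAt_id x).add_const a).log h1.ne'
  have h3 : HasDerivAt (fun b : ℝ => b * Real.log (b + a))
      (1 * Real.log (x + a) + x * (1 / (x + a))) x := (hasDerivAt_id x).mul h2
  convert h3 using 1
  ring

private lemma aux_d2 (a x : ℝ) (hx : 0 < x) (ha : 0 < a) :
    HasDerivAt (fun b : ℝ => Real.log (b + a) + b / (b + a))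
      (1 / (x + a) + a / (x + a) ^ 2) x := by
  have h1 : (0:ℝ) < x + a := by linarith
  have h2 : HasDerivAt (fun b : ℝ => Real.log (b + a)) (1 / (x + a)) x := by
    simpa using ((hasDerivAt_id x).add_const a).log h1.ne'
  have h3 : HasDerivAt (fun b : ℝ => b / (b + a))
      ((1 * (x + a) - x * 1) / (x + a) ^ 2) x :=
    (hasDerivAt_id x).div ((hasDerivAt_id x).add_const a) h1.ne'
  have h4 : HasDerivAt (fun b : ℝ => Real.log (b + a) + b / (b + a))
      (1 / (x + a) + (1 * (x + a) - x * 1) / (x + a) ^ 2) x := h2.add h3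
  convert h4 using 1
  ring

private lemma aux_main (a c : ℝ) (ha : 0 < a) (hc : 0 < c) (hac : c < a) :
    StrictConcaveOn ℝ (Set.Ioi 0)
      (fun b : ℝ => (b * Real.log (b + a) - b * Real.log (b + c)) / Real.log 2) := by
  have hlog2 : (0:ℝ) < Real.log 2 := Real.log_pos one_lt_two
  set F : ℝ → ℝ := fun b => (b * Real.log (b + a) - b * Real.log (b + c)) / Real.log 2 with hF
  set G : ℝ → ℝ := fun x =>
    (Real.log (x + a) + x / (x + a) - (Real.log (x + c) + x / (x + c))) / Real.log 2 with hG
  have hd1 : ∀ x ∈ Ioi (0:ℝ), HasDerivAt F (G x) x := by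
    intro x hx
    exact ((aux_d1 a x hx ha).sub (aux_d1 c x hx hc)).div_const _
  apply strictConcaveOn_of_deriv2_neg (convex_Ioi 0)
    (fun x hx => (hd1 x hx).continuousAt.continuousWithinAt)
  intro x hx
  rw [interior_Ioi] at hx
  have hx0 : (0:ℝ) < x := hx
  have h1 : (0:ℝ) < x + a := by linarith
  have h2 : (0:ℝ) < x + c := by linarith
  have heq : deriv F =ᶠ[nhds x] G :=
    Filter.eventuallyEq_of_mem (Ioi_mem_nhds hx0) (fun y hy => (hd1 y hy).deriv)
  have hdG : HasDerivAt G
      ((1 / (x + a) + a / (x + a) ^ 2 - (1 / (x + c) + c / (x + c) ^ 2)) / Real.log 2) x :=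
    ((aux_d2 a x hx0 ha).sub (aux_d2 c x hx0 hc)).div_const _
  have hval : deriv (deriv F) x
      = (1 / (x + a) + a / (x + a) ^ 2 - (1 / (x + c) + c / (x + c) ^ 2)) / Real.log 2 := by
    rw [heq.deriv_eq]
    exact hdG.deriv
  show deriv^[2] F x < 0
  have : deriv^[2] F x = deriv (deriv F) x := by
    simp [Function.iterate_succ, Function.iterate_one]
  rw [this, hval]
  apply div_neg_of_neg_of_pos _ hlog2
  have key : 1 / (x + a) + a / (x + a) ^ 2 - (1 / (x + c) + c / (x + c) ^ 2)
      = ((x + 2 * a) * (x + c) ^ 2 - (x + 2 * c) * (x + a) ^ 2) / ((x + a) ^ 2 * (x + c) ^ 2) := by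
    field_simp
    ring
  rw [key]
  apply div_neg_of_neg_of_pos _ (by positivity)
  nlinarith [mul_pos (sub_pos.mpr hac) (add_pos (mul_pos hx0 (add_pos ha hc))
    (mul_pos (mul_pos two_pos ha) hc)), sq_nonneg (a - c), mul_pos ha hc]

/-- For `g, σ², g_e, σ_e² > 0` with `g/σ² > g_e/σ_e²` and fixed `p > 0`, the secrecy rate
`b ↦ r_s(b,p) = b·log₂(1 + g·p/(σ²·b)) − b·log₂(1 + g_e·p/(σ_e²·b))` is strictly
concave on `(0, ∞)`. -/
theorem stmt8 (g σ2 ge σe2 p : ℝ) (hg : 0 < g) (hσ2 : 0 < σ2) (hge : 0 < ge)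
    (hσe2 : 0 < σe2) (hgain : ge / σe2 < g / σ2) (hp : 0 < p) :
    StrictConcaveOn ℝ (Set.Ioi 0)
      (fun b : ℝ => b * Real.logb 2 (1 + g * p / (σ2 * b))
        - b * Real.logb 2 (1 + ge * p / (σe2 * b))) := by
  set a := g * p / σ2 with ha_def
  set c := ge * p / σe2 with hc_def
  have ha : 0 < a := by positivity
  have hc : 0 < c := by positivity
  have hac : c < a := by
    have h := mul_lt_mul_of_pos_right hgain hp
    have e1 : c = ge / σe2 * p := by rw [hc_def]; ring
    have e2 : a = g / σ2 * p := by rw [ha_def]; ring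
    rw [e1, e2]; exact h
  have key := aux_main a c ha hc hac
  have heq : ∀ b ∈ Ioi (0:ℝ),
      b * Real.logb 2 (1 + g * p / (σ2 * b)) - b * Real.logb 2 (1 + ge * p / (σe2 * b))
      = (b * Real.log (b + a) - b * Real.log (b + c)) / Real.log 2 := by
    intro b hb
    have hb0 : (0:ℝ) < b := hb
    have h1 : 1 + g * p / (σ2 * b) = (b + a) / b := by
      rw [ha_def]; field_simp
    have h2 : 1 + ge * p / (σe2 * b) = (b + c) / b := by
      rw [hc_def]; field_simp
    rw [h1, h2, Real.logb, Real.logb,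
      Real.log_div (by positivity) hb0.ne', Real.log_div (by positivity) hb0.ne']
    field_simp
    ring
  refine ⟨key.1, fun x hx y hy hxy u v hu hv huv => ?_⟩
  have hmem : u • x + v • y ∈ Ioi (0:ℝ) := key.1 hx hy hu.le hv.le huv
  have hres := key.2 hx hy hxy hu hv huv
  simp only [smul_eq_mul] at hres hmem ⊢
  rw [heq x hx, heq y hy, heq _ hmem]
  exact hres
end

section
/- Let g, σ², g_e, σ_e² > 0 with g/σ² > g_e/σ_e², fix p > 0, and let D > 0 (the number of bits of the adapter, D = φ·L·w). Then the uplink transmission delay t(b) = D / r_s(b, p), where r_s(b, p) = b·log₂(1 + g·p/(σ²·b)) − b·log₂(1 + g_e·p/(σ_e²·b)), is strictly decreasing in b on (0, ∞). -/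
open Real Set

private lemma aux_key (A B b : ℝ) (hb : 0 < b) (hB : 0 < B) (hAB : B < A) :
    b / (b + A) - b / (b + B) + (Real.log (b + A) - Real.log (b + B)) > 0 := by
  have hbA : 0 < b + A := by linarith
  have hbB : 0 < b + B := by linarith
  -- log(b+A) - log(b+B) = - log((b+B)/(b+A)) > -( (b+B)/(b+A) - 1 ) = (A-B)/(b+A)
  have hx : (b + B) / (b + A) < 1 := by
    rw [div_lt_one hbA]; linarith
  have hlog : Real.log ((b + B) / (b + A)) < (b + B) / (b + A) - 1 :=
    Real.log_lt_sub_one_of_pos (by positivity) (ne_of_lt hx)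
  rw [Real.log_div (ne_of_gt hbB) (ne_of_gt hbA)] at hlog
  have h1 : Real.log (b + A) - Real.log (b + B) > 1 - (b + B) / (b + A) := by linarith
  have h2 : (1 : ℝ) - (b + B) / (b + A) = (A - B) / (b + A) := by
    field_simp
    ring
  have h3 : b / (b + B) - b / (b + A) < (A - B) / (b + A) := by
    rw [div_sub_div _ _ (ne_of_gt hbB) (ne_of_gt hbA), div_lt_div_iff₀ (by positivity) hbA]
    ring_nf
    nlinarith [mul_pos hb (sub_pos.mpr hAB), mul_pos hB (sub_pos.mpr hAB)]
  linarith

private lemma aux_mono (A B : ℝ) (hB : 0 < B) (hAB : B < A) :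
    StrictMonoOn (fun b => b * Real.log (b + A) - b * Real.log (b + B)) (Set.Ioi 0) := by
  have hA : 0 < A := hB.trans hAB
  apply StrictMonoOn.mono (s := Set.Ici (0:ℝ)) ?_ (Set.Ioi_subset_Ici le_rfl)
  apply strictMonoOn_of_deriv_pos (convex_Ici 0)
  · apply ContinuousOn.sub
    · exact continuousOn_id.mul ((continuousOn_id.add continuousOn_const).log
        (fun x hx => by have : (0:ℝ) ≤ x := hx; show x + A ≠ 0; positivity))
    · exact continuousOn_id.mul ((continuousOn_id.add continuousOn_const).log
        (fun x hx => by have : (0:ℝ) ≤ x := hx; show x + B ≠ 0; positivity))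
  · intro b hb
    rw [interior_Ici] at hb
    have hb0 : 0 < b := hb
    have hbA : 0 < b + A := by linarith
    have hbB : 0 < b + B := by linarith
    have dA : HasDerivAt (fun x : ℝ => x * Real.log (x + A))
        (1 * Real.log (b + A) + b * (1 / (b + A))) b := by
      exact (hasDerivAt_id b).mul (((hasDerivAt_id b).add_const A).log (ne_of_gt hbA))
    have dB : HasDerivAt (fun x : ℝ => x * Real.log (x + B))
        (1 * Real.log (b + B) + b * (1 / (b + B))) b := by
      exact (hasDerivAt_id b).mul (((hasDerivAt_id b).add_const B).log (ne_of_gt hbB))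
    rw [HasDerivAt.deriv (f := fun x => x * Real.log (x + A) - x * Real.log (x + B)) (dA.sub dB)]
    have := aux_key A B b hb0 hB hAB
    have e1 : b * (1 / (b + A)) = b / (b + A) := by ring
    have e2 : b * (1 / (b + B)) = b / (b + B) := by ring
    linarith [this]

/-- For `g, σ², g_e, σ_e² > 0` with `g/σ² > g_e/σ_e²`, fixed `p > 0` and `D > 0`,
the uplink transmission delay `t(b) = D / r_s(b, p)`, where
`r_s(b,p) = b·log₂(1 + g·p/(σ²·b)) − b·log₂(1 + g_e·p/(σ_e²·b))`, is strictly
decreasing in `b` on `(0, ∞)`. -/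
theorem stmt9 (g σ2 ge σe2 p D : ℝ) (hg : 0 < g) (hσ2 : 0 < σ2) (hge : 0 < ge)
    (hσe2 : 0 < σe2) (hgain : ge / σe2 < g / σ2) (hp : 0 < p) (hD : 0 < D) :
    StrictAntiOn
      (fun b : ℝ => D / (b * Real.logb 2 (1 + g * p / (σ2 * b))
        - b * Real.logb 2 (1 + ge * p / (σe2 * b))))
      (Set.Ioi 0) := by
  set A := g * p / σ2 with hA_def
  set B := ge * p / σe2 with hB_def
  have hA : 0 < A := by positivity
  have hB : 0 < B := by positivity
  have hAB : B < A := by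
    rw [hA_def, hB_def, div_lt_div_iff₀ hσe2 hσ2]
    rw [div_lt_div_iff₀ hσe2 hσ2] at hgain
    nlinarith
  have hlog2 : 0 < Real.log 2 := Real.log_pos (by norm_num)
  -- rewrite the function on Ioi 0
  have key : ∀ b ∈ Set.Ioi (0:ℝ),
      b * Real.logb 2 (1 + g * p / (σ2 * b)) - b * Real.logb 2 (1 + ge * p / (σe2 * b))
      = (b * Real.log (b + A) - b * Real.log (b + B)) / Real.log 2 := by
    intro b hb
    have hb0 : 0 < b := hb
    have e1 : 1 + g * p / (σ2 * b) = (b + A) / b := by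
      rw [hA_def]; field_simp
    have e2 : 1 + ge * p / (σe2 * b) = (b + B) / b := by
      rw [hB_def]; field_simp
    rw [e1, e2, Real.logb, Real.logb,
      Real.log_div (by positivity) (ne_of_gt hb0),
      Real.log_div (by positivity) (ne_of_gt hb0)]
    field_simp
    ring
  have hmono := aux_mono A B hB hAB
  intro x hx y hy hxy
  have hx0 : 0 < x := hx
  have hy0 : 0 < y := hy
  simp only
  rw [key x hx, key y hy]
  have hfx : 0 < x * Real.log (x + A) - x * Real.log (x + B) := by
    have : Real.log (x + B) < Real.log (x + A) :=
      Real.log_lt_log (by linarith) (by linarith)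
    nlinarith
  have hlt : x * Real.log (x + A) - x * Real.log (x + B)
      < y * Real.log (y + A) - y * Real.log (y + B) := hmono hx hy hxy
  apply div_lt_div_of_pos_left hD (by positivity)
  exact div_lt_div_of_pos_right hlt hlog2
end

section
/- Let g, σ², g_e, σ_e² > 0 with g/σ² > g_e/σ_e², fix b > 0, and let D > 0. Then the uplink transmission energy E(p) = p·D / r_s(b, p), where r_s(b, p) = b·log₂(1 + g·p/(σ²·b)) − b·log₂(1 + g_e·p/(σ_e²·b)), is strictly increasing in p on (0, ∞). -/
private lemma key_ineq (s t : ℝ) (hs : 0 < s) (hst : s < t) :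
    t / (1 + t) - s / (1 + s) < Real.log (1 + t) - Real.log (1 + s) := by
  have h1 : (0:ℝ) < 1 + s := by linarith
  have h2 : (0:ℝ) < 1 + t := by linarith
  have hx : (1 + s) / (1 + t) ≠ 1 := by
    intro h
    have := (div_eq_one_iff_eq h2.ne').mp h
    linarith
  have hlog : Real.log ((1+s)/(1+t)) < (1+s)/(1+t) - 1 :=
    Real.log_lt_sub_one_of_pos (by positivity) hx
  rw [Real.log_div h1.ne' h2.ne'] at hlog
  have e1 : (1+s)/(1+t) - 1 = -((t-s)/(1+t)) := by field_simp; ring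
  have e2 : t/(1+t) - s/(1+s) = (t-s)/((1+t)*(1+s)) := by field_simp; ring
  have e3 : (t-s)/((1+t)*(1+s)) < (t-s)/(1+t) :=
    div_lt_div_of_pos_left (by linarith) h2 (by nlinarith)
  linarith

private lemma phi_anti (α β : ℝ) (hβ : 0 < β) (hαβ : β < α) :
    StrictAntiOn (fun p : ℝ => (Real.log (1 + α * p) - Real.log (1 + β * p)) / p)
      (Set.Ioi 0) := by
  have hα : 0 < α := hβ.trans hαβ
  have hder : ∀ p ∈ Set.Ioi (0:ℝ),
      HasDerivAt (fun p : ℝ => (Real.log (1 + α*p) - Real.log (1 + β*p)) / p)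
      (((α/(1+α*p) - β/(1+β*p)) * p - (Real.log (1+α*p) - Real.log (1+β*p)) * 1) / p^2) p := by
    intro p hp
    have hp : 0 < p := hp
    have h1 : (0:ℝ) < 1 + α*p := by positivity
    have h2 : (0:ℝ) < 1 + β*p := by positivity
    have d1 : HasDerivAt (fun p : ℝ => Real.log (1 + α*p)) (α/(1+α*p)) p := by
      have h : HasDerivAt (fun p : ℝ => 1 + α*p) α p := by
        simpa using ((hasDerivAt_id p).const_mul α).const_add 1
      simpa using h.log h1.ne'
    have d2 : HasDerivAt (fun p : ℝ => Real.log (1 + β*p)) (β/(1+β*p)) p := by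
      have h : HasDerivAt (fun p : ℝ => 1 + β*p) β p := by
        simpa using ((hasDerivAt_id p).const_mul β).const_add 1
      simpa using h.log h2.ne'
    exact (d1.sub d2).div (hasDerivAt_id p) hp.ne'
  apply strictAntiOn_of_deriv_neg (convex_Ioi 0)
  · exact fun p hp => (hder p hp).continuousAt.continuousWithinAt
  · intro p hp
    rw [interior_Ioi] at hp
    rw [(hder p hp).deriv]
    have hp' : 0 < p := hp
    apply div_neg_of_neg_of_pos _ (by positivity)
    have k := key_ineq (β*p) (α*p) (by positivity) (by nlinarith)
    have h1 : (0:ℝ) < 1 + α*p := by positivity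
    have h2 : (0:ℝ) < 1 + β*p := by positivity
    have e : (α/(1+α*p) - β/(1+β*p)) * p = α*p/(1+α*p) - β*p/(1+β*p) := by
      field_simp
    rw [e]
    linarith

/-- For `g, σ², g_e, σ_e² > 0` with `g/σ² > g_e/σ_e²`, fixed `b > 0` and `D > 0`,
the uplink transmission energy `E(p) = p·D / r_s(b, p)`, where
`r_s(b,p) = b·log₂(1 + g·p/(σ²·b)) − b·log₂(1 + g_e·p/(σ_e²·b))`, is strictly
increasing in `p` on `(0, ∞)`. -/
theorem stmt10 (g σ2 ge σe2 b D : ℝ) (hg : 0 < g) (hσ2 : 0 < σ2) (hge : 0 < ge)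
    (hσe2 : 0 < σe2) (hgain : ge / σe2 < g / σ2) (hb : 0 < b) (hD : 0 < D) :
    StrictMonoOn
      (fun p : ℝ => p * D / (b * Real.logb 2 (1 + g * p / (σ2 * b))
        - b * Real.logb 2 (1 + ge * p / (σe2 * b))))
      (Set.Ioi 0) := by
  set α := g / (σ2 * b) with hαdef
  set β := ge / (σe2 * b) with hβdef
  have hα : 0 < α := by positivity
  have hβ : 0 < β := by positivity
  have hαβ : β < α := by
    rw [hαdef, hβdef, div_lt_div_iff₀ (by positivity) (by positivity)]
    have := (div_lt_div_iff₀ hσe2 hσ2).mp hgain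
    nlinarith
  have hc : (0:ℝ) < Real.log 2 := Real.log_pos (by norm_num)
  set c := Real.log 2 with hcdef
  set φ := fun p : ℝ => (Real.log (1 + α * p) - Real.log (1 + β * p)) / p with hφdef
  have hanti := phi_anti α β hβ hαβ
  have hφpos : ∀ p ∈ Set.Ioi (0:ℝ), 0 < φ p := by
    intro p hp
    have hp : 0 < p := hp
    apply div_pos _ hp
    have : Real.log (1 + β*p) < Real.log (1 + α*p) :=
      Real.log_lt_log (by positivity) (by nlinarith)
    linarith
  have hE : ∀ p ∈ Set.Ioi (0:ℝ),
      p * D / (b * Real.logb 2 (1 + g * p / (σ2 * b))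
        - b * Real.logb 2 (1 + ge * p / (σe2 * b)))
      = (D * c / b) / φ p := by
    intro p hp
    have hp : 0 < p := hp
    have e1 : g * p / (σ2 * b) = α * p := by rw [hαdef]; ring
    have e2 : ge * p / (σe2 * b) = β * p := by rw [hβdef]; ring
    have hφp := hφpos p hp
    have hne : Real.log (1 + α*p) - Real.log (1 + β*p) ≠ 0 := by
      intro h
      rw [hφdef] at hφp
      simp only [h, zero_div] at hφp
      exact lt_irrefl _ hφp
    rw [e1, e2]
    simp only [Real.logb, hφdef, ← hcdef]
    rw [div_eq_div_iff (by
      have : b * (Real.log (1 + α * p) / c) - b * (Real.log (1 + β * p) / c)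
          = b / c * (Real.log (1 + α * p) - Real.log (1 + β * p)) := by ring
      rw [this]
      exact (mul_ne_zero (by positivity) hne))
      (by positivity)]
    field_simp
  intro p hp q hq hpq
  simp only
  rw [hE p hp, hE q hq]
  exact div_lt_div_of_pos_left (by positivity) (hφpos q hq) (hanti hp hq hpq)
end
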